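/- For each $i \in \mathbb{N}$ let $\varepsilon_i > 0$, $\beta_i \in (0, \frac{1}{80})$ and $w_i \in (-1,1)$ be given such that $\sum_{i=1}^{\infty} \beta_i = \frac{1}{4}$, $\sum_{i=1}^{\infty} \varepsilon_i < \frac{1}{24}$, and the intervals $(w_i - \varepsilon_i, w_i + \varepsilon_i)$ are pairwise disjoint subsets of $[-1,1]$. Define $g_i(x,y) := g_{\beta_i, \varepsilon_i}(x - w_i, y)$ and $h_i(x,y) := g_{\beta_i, \varepsilon_i}(y - w_i, x)$, define $f : \mathbb{R}^2 \to \mathbb{R}$ by $f(x,y) := -xy + \sum_{i=1}^{4} f_i(x,y) + \sum_{i=1}^{\infty} (g_i(x,y) + h_i(x,y))$, and set $K := [-1,1] \setminus \bigcup_{i=1}^{\infty} (w_i - \varepsilon_i, w_i + \varepsilon_i)$. Then: (a) $\frac{f(-1,-1) + f(1,1)}{2} < f(0,0)$, so $f$ is non-convex; and (b) $f$ is locally convex on $\mathbb{R}^2 \setminus K^2$, where $K^2 = K \times K$. -/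

import Mathlib

/-- `f` is locally convex on the open set `U`: every point of `U` has an open convex
neighbourhood `V ⊆ U` on which `f` is convex. -/
def IsLocallyConvexOn (U : Set (ℝ × ℝ)) (f : ℝ × ℝ → ℝ) : Prop :=
  ∀ x ∈ U, ∃ V : Set (ℝ × ℝ),
    IsOpen V ∧ Convex ℝ V ∧ x ∈ V ∧ V ⊆ U ∧ ConvexOn ℝ V f

/-- The function `g_{β,ε}` from the paper. -/
noncomputable def gBE (β ε : ℝ) (p : ℝ × ℝ) : ℝ :=
  if p.1 ≤ -ε then β * p.2 ^ 2 - 2 * ε * p.1 - ε ^ 2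
  else if p.1 < ε then β * p.2 ^ 2 + p.1 ^ 2
  else β * p.2 ^ 2 + 2 * ε * p.1 - ε ^ 2

/-- The function `f₁` from the paper. -/
noncomputable def fOne (p : ℝ × ℝ) : ℝ :=
  if 1 < p.2 then (1 / 12) * p.1 ^ 2 + 4 * (p.2 - 1) ^ 2
  else (1 / 12) * p.1 ^ 2

/-- `f₂(x,y) = f₁(x,-y)`. -/
noncomputable def fTwo (p : ℝ × ℝ) : ℝ := fOne (p.1, -p.2)

/-- `f₃(x,y) = f₁(y,x)`. -/
noncomputable def fThree (p : ℝ × ℝ) : ℝ := fOne (p.2, p.1)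

/-- `f₄(x,y) = f₃(-x,y)`. -/
noncomputable def fFour (p : ℝ × ℝ) : ℝ := fThree (-p.1, p.2)

/-!
Summing the pieces, `f (x, y) = -x y + u x + u y` with `u = profile ε w`. The quadratic part
`-x y + (5/12)(x² + y²)` is indefinite, while the convex remainder `u x - (5/12) x²` vanishes at
`0` and adds at most `4 ∑ εᵢ < 1/6` in total at `x = ±1`; this gives (a). Off `K` one coordinate,
say `x`, lies in `(-∞, -1)`, `(1, ∞)` or some `(wᵢ - εᵢ, wᵢ + εᵢ)`, where `ramp` or the `i`-th
Huber term contributes at least `x²` of curvature, so `u x - (17/12) x²` is convex there. As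
`4 · (17/12) · (5/12) ≥ 1`, the form `-x y + (17/12) x² + (5/12) y²` is positive semidefinite,
and `f` is convex on the strip over that interval.
-/

open Set

theorem convexOn_univ_of_supporting_lines {φ : ℝ → ℝ}
    (h : ∀ z, ∃ m, ∀ x, φ z + m * (x - z) ≤ φ x) : ConvexOn ℝ univ φ := by
  refine ⟨convex_univ, fun x _ y _ a b ha hb hab => ?_⟩
  obtain rfl : b = 1 - a := by linarith
  obtain ⟨m, hm⟩ := h (a • x + (1 - a) • y)
  have hx := mul_le_mul_of_nonneg_left (hm x) ha
  have hy := mul_le_mul_of_nonneg_left (hm y) hb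
  simp only [smul_eq_mul] at *
  linear_combination hx + hy

theorem convexOn_univ_quadratic {a : ℝ} (ha : 0 ≤ a) (b c : ℝ) :
    ConvexOn ℝ univ fun x => a * x ^ 2 + b * x + c :=
  convexOn_univ_of_supporting_lines fun z =>
    ⟨2 * a * z + b, fun x => by nlinarith [mul_nonneg ha (sq_nonneg (x - z))]⟩

theorem ConvexOn.tsum {ι E : Type*} [AddCommMonoid E] [Module ℝ E] {s : Set E}
    {u : ι → E → ℝ} (hs : Convex ℝ s) (hu : ∀ j, ConvexOn ℝ s (u j))
    (hsum : ∀ x ∈ s, Summable fun j => u j x) : ConvexOn ℝ s fun x => ∑' j, u j x := by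
  refine ⟨hs, fun x hx y hy a b ha hb hab => ?_⟩
  calc ∑' j, u j (a • x + b • y) ≤ ∑' j, (a * u j x + b * u j y) :=
        Summable.tsum_le_tsum (fun j => (hu j).2 hx hy ha hb hab) (hsum _ (hs hx hy ha hb hab))
          (((hsum x hx).mul_left a).add ((hsum y hy).mul_left b))
    _ = a • ∑' j, u j x + b • ∑' j, u j y := by
        rw [Summable.tsum_add ((hsum x hx).mul_left a) ((hsum y hy).mul_left b),
          tsum_mul_left, tsum_mul_left, smul_eq_mul, smul_eq_mul]

theorem neg_mul_add_sq_nonneg {α γ : ℝ} (hα : 0 < α) (hαγ : 1 ≤ 4 * α * γ) (x y : ℝ) :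
    0 ≤ -(x * y) + α * x ^ 2 + γ * y ^ 2 := by
  have : 0 ≤ 4 * α * (-(x * y) + α * x ^ 2 + γ * y ^ 2) := by
    nlinarith [sq_nonneg (2 * α * x - y), mul_nonneg (sub_nonneg.2 hαγ) (sq_nonneg y)]
  exact (mul_nonneg_iff_of_pos_left (by positivity)).1 this

theorem convexOn_univ_neg_mul_add_sq {α γ : ℝ} (hα : 0 < α) (hαγ : 1 ≤ 4 * α * γ) :
    ConvexOn ℝ univ fun q : ℝ × ℝ => -(q.1 * q.2) + α * q.1 ^ 2 + γ * q.2 ^ 2 := by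
  refine ⟨convex_univ, fun x _ y _ a b ha hb hab => ?_⟩
  obtain rfl : b = 1 - a := by linarith
  have h := mul_nonneg (mul_nonneg ha hb) (neg_mul_add_sq_nonneg hα hαγ (x.1 - y.1) (x.2 - y.2))
  simp only [Prod.fst_add, Prod.snd_add, Prod.smul_fst, Prod.smul_snd, smul_eq_mul]
  linear_combination h

theorem convexOn_prod_neg_mul_add {U₁ U₂ : ℝ → ℝ} {I J : Set ℝ} {α γ : ℝ} (hα : 0 < α)
    (hαγ : 1 ≤ 4 * α * γ) (h₁ : ConvexOn ℝ I fun x => U₁ x - α * x ^ 2)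
    (h₂ : ConvexOn ℝ J fun y => U₂ y - γ * y ^ 2) :
    ConvexOn ℝ (I ×ˢ J) fun q => -(q.1 * q.2) + U₁ q.1 + U₂ q.2 := by
  have hIJ := h₁.1.prod h₂.1
  have hQ := (convexOn_univ_neg_mul_add_sq hα hαγ).subset (subset_univ _) hIJ
  have hU₁ := (h₁.comp_linearMap (LinearMap.fst ℝ ℝ ℝ)).subset (fun q hq => hq.1) hIJ
  have hU₂ := (h₂.comp_linearMap (LinearMap.snd ℝ ℝ ℝ)).subset (fun q hq => hq.2) hIJ
  refine ((hQ.add hU₁).add hU₂).congr fun q _ => ?_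
  simp only [Pi.add_apply, Function.comp_apply, LinearMap.fst_apply, LinearMap.snd_apply]
  ring

noncomputable def huber (ε x : ℝ) : ℝ :=
  if x ≤ -ε then -(2 * ε * x) - ε ^ 2 else if x < ε then x ^ 2 else 2 * ε * x - ε ^ 2

noncomputable def ramp (y : ℝ) : ℝ := if 1 < y then 4 * (y - 1) ^ 2 else 0

theorem gBE_eq_add_huber (β ε : ℝ) (p : ℝ × ℝ) : gBE β ε p = β * p.2 ^ 2 + huber ε p.1 := by
  unfold gBE huber; split_ifs <;> ring

theorem fOne_eq_add_ramp (p : ℝ × ℝ) : fOne p = 1 / 12 * p.1 ^ 2 + ramp p.2 := by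
  unfold fOne ramp; split_ifs <;> ring

section Huber

variable {ε : ℝ}

theorem huber_nonneg (hε : 0 ≤ ε) (x : ℝ) : 0 ≤ huber ε x := by
  unfold huber; split_ifs <;> nlinarith

theorem huber_le (hε : 0 ≤ ε) (x : ℝ) : huber ε x ≤ 2 * ε * |x| := by
  unfold huber
  rcases abs_cases x with ⟨hx, _⟩ | ⟨hx, _⟩ <;> rw [hx] <;> split_ifs <;> nlinarith

theorem huber_of_mem_Ioo {x : ℝ} (hx : x ∈ Ioo (-ε) ε) : huber ε x = x ^ 2 := by
  rw [huber, if_neg (not_le.2 hx.1), if_pos hx.2]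

theorem huber_zero_left (x : ℝ) : huber 0 x = 0 := by
  unfold huber; split_ifs <;> linarith

theorem convexOn_huber (hε : 0 ≤ ε) : ConvexOn ℝ univ (huber ε) :=
  convexOn_univ_of_supporting_lines fun z =>
    ⟨if z ≤ -ε then -(2 * ε) else if z < ε then 2 * z else 2 * ε, fun x => by
      unfold huber
      split_ifs <;> nlinarith [sq_nonneg (x - z), sq_nonneg (x + ε), sq_nonneg (x - ε)]⟩

end Huber

theorem ramp_nonneg (y : ℝ) : 0 ≤ ramp y := by
  unfold ramp; split_ifs <;> positivity

theorem ramp_of_le_one {y : ℝ} (hy : y ≤ 1) : ramp y = 0 := by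
  rw [ramp, if_neg (not_lt.2 hy)]

theorem ramp_of_one_lt {y : ℝ} (hy : 1 < y) : ramp y = 4 * (y - 1) ^ 2 := by
  rw [ramp, if_pos hy]

theorem convexOn_ramp : ConvexOn ℝ univ ramp :=
  convexOn_univ_of_supporting_lines fun z =>
    ⟨if 1 < z then 8 * (z - 1) else 0, fun x => by
      unfold ramp
      split_ifs <;> nlinarith [sq_nonneg (x - z), sq_nonneg (x - 1)]⟩

theorem convexOn_ramp_neg : ConvexOn ℝ univ fun y => ramp (-y) :=
  convexOn_ramp.comp_linearMap (-LinearMap.id)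

/-- `f (x, y) = -x y + profile ε w x + profile ε w y`; the coefficient `5 / 12` is
`2 · (1 / 12)` from `f₁, …, f₄` plus `∑ βᵢ = 1 / 4`. -/
noncomputable def profile (ε w : ℕ → ℝ) (x : ℝ) : ℝ :=
  5 / 12 * x ^ 2 + (ramp x + ramp (-x)) + ∑' i, huber (ε i) (x - w i)

def uncovered (ε w : ℕ → ℝ) : Set ℝ :=
  Icc (-1) 1 \ ⋃ i, Ioo (w i - ε i) (w i + ε i)

section Profile

variable {ε w : ℕ → ℝ}

theorem summable_huber (hε : ∀ i, 0 ≤ ε i) (hw : ∀ i, |w i| ≤ 1) (hs : Summable ε) (x : ℝ) :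
    Summable fun i => huber (ε i) (x - w i) := by
  refine Summable.of_nonneg_of_le (fun i => huber_nonneg (hε i) _) (fun i => ?_)
    (hs.mul_right (2 * (|x| + 1)))
  have hxw : |x - w i| ≤ |x| + 1 := by linarith [abs_sub x (w i), hw i]
  nlinarith [huber_le (hε i) (x - w i), mul_le_mul_of_nonneg_left hxw (hε i)]

theorem convexOn_tsum_huber (hε : ∀ i, 0 ≤ ε i) (hw : ∀ i, |w i| ≤ 1) (hs : Summable ε) :
    ConvexOn ℝ univ fun x => ∑' i, huber (ε i) (x - w i) :=
  ConvexOn.tsum convex_univ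
    (fun i => ((convexOn_huber (hε i)).translate_right (-w i)).congr fun x _ => by
      simp only [Function.comp_apply, neg_add_eq_sub])
    fun x _ => summable_huber hε hw hs x

theorem profile_nonneg (hε : ∀ i, 0 ≤ ε i) (x : ℝ) : 0 ≤ profile ε w x := by
  have : 0 ≤ ∑' i, huber (ε i) (x - w i) := tsum_nonneg fun i => huber_nonneg (hε i) _
  unfold profile
  nlinarith [ramp_nonneg x, ramp_nonneg (-x), sq_nonneg x]

theorem profile_one_add_profile_neg_one_lt (hε : ∀ i, 0 ≤ ε i) (hw : ∀ i, |w i| ≤ 1)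
    (hs : Summable ε) (hsum : ∑' i, ε i < 1 / 24) : profile ε w 1 + profile ε w (-1) < 1 := by
  have hle : ∑' i, huber (ε i) (1 - w i) + ∑' i, huber (ε i) (-1 - w i) ≤ ∑' i, 4 * ε i := by
    rw [← (summable_huber hε hw hs 1).tsum_add (summable_huber hε hw hs (-1))]
    refine Summable.tsum_le_tsum (fun i => ?_) ((summable_huber hε hw hs 1).add
      (summable_huber hε hw hs (-1))) (hs.mul_left 4)
    have h₁ := huber_le (hε i) (1 - w i)
    have h₂ := huber_le (hε i) (-1 - w i)
    rw [abs_of_nonneg (by linarith [(abs_le.1 (hw i)).2])] at h₁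
    rw [abs_of_nonpos (by linarith [(abs_le.1 (hw i)).1])] at h₂
    linarith
  rw [tsum_mul_left] at hle
  simp only [profile, ramp_of_le_one (le_refl 1), ramp_of_le_one (by norm_num : (-1 : ℝ) ≤ 1),
    neg_neg]
  linarith

theorem convexOn_profile_sub_sq (hε : ∀ i, 0 ≤ ε i) (hw : ∀ i, |w i| ≤ 1) (hs : Summable ε) :
    ConvexOn ℝ univ fun x => profile ε w x - 5 / 12 * x ^ 2 :=
  ((convexOn_ramp.add convexOn_ramp_neg).add (convexOn_tsum_huber hε hw hs)).congr
    fun x _ => by simp only [profile, Pi.add_apply]; ring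

theorem convexOn_Ioi_profile_sub_sq (hε : ∀ i, 0 ≤ ε i) (hw : ∀ i, |w i| ≤ 1) (hs : Summable ε) :
    ConvexOn ℝ (Ioi 1) fun x => profile ε w x - 17 / 12 * x ^ 2 := by
  refine (((convexOn_univ_quadratic (by norm_num : (0 : ℝ) ≤ 3) (-8) 4).add
    (convexOn_ramp_neg.add (convexOn_tsum_huber hε hw hs))).subset (subset_univ _)
      (convex_Ioi 1)).congr fun x hx => ?_
  simp only [profile, Pi.add_apply, ramp_of_one_lt (mem_Ioi.1 hx)]
  ring

theorem convexOn_Iio_profile_sub_sq (hε : ∀ i, 0 ≤ ε i) (hw : ∀ i, |w i| ≤ 1) (hs : Summable ε) :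
    ConvexOn ℝ (Iio (-1)) fun x => profile ε w x - 17 / 12 * x ^ 2 := by
  refine (((convexOn_univ_quadratic (by norm_num : (0 : ℝ) ≤ 3) 8 4).add
    (convexOn_ramp.add (convexOn_tsum_huber hε hw hs))).subset (subset_univ _)
      (convex_Iio (-1))).congr fun x hx => ?_
  simp only [profile, Pi.add_apply,
    ramp_of_one_lt (show 1 < -x by linarith [mem_Iio.1 hx])]
  ring

theorem convexOn_Ioo_profile_sub_sq (hε : ∀ i, 0 ≤ ε i) (hw : ∀ i, |w i| ≤ 1) (hs : Summable ε)
    (i : ℕ) :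
    ConvexOn ℝ (Ioo (w i - ε i) (w i + ε i)) fun x => profile ε w x - 17 / 12 * x ^ 2 := by
  -- With `εᵢ` set to `0` the `i`-th Huber term disappears, and the rest is again a Huber sum.
  set ε' : ℕ → ℝ := fun j => if j = i then 0 else ε j
  have hε' : ∀ j, 0 ≤ ε' j := fun j => by dsimp only [ε']; split_ifs <;> simp [hε j]
  have hs' : Summable ε' := hs.of_nonneg_of_le hε' fun j => by
    dsimp only [ε']; split_ifs <;> simp [hε j]
  have hsplit : ∀ x, ∑' j, huber (ε j) (x - w j) =
      huber (ε i) (x - w i) + ∑' j, huber (ε' j) (x - w j) := fun x => by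
    rw [(summable_huber hε hw hs x).tsum_eq_add_tsum_ite i]
    congr 1
    refine tsum_congr fun j => ?_
    dsimp only [ε']
    split_ifs <;> simp [huber_zero_left]
  refine (((convexOn_univ_quadratic le_rfl (-2 * w i) (w i ^ 2)).add
    ((convexOn_ramp.add convexOn_ramp_neg).add (convexOn_tsum_huber hε' hw hs'))).subset
      (subset_univ _) (convex_Ioo _ _)).congr fun x hx => ?_
  have hx' : x - w i ∈ Ioo (-ε i) (ε i) := ⟨by linarith [hx.1], by linarith [hx.2]⟩
  simp only [profile, Pi.add_apply, hsplit x, huber_of_mem_Ioo hx']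
  ring

theorem exists_convexOn_profile_sub_sq_of_notMem_uncovered (hε : ∀ i, 0 ≤ ε i)
    (hw : ∀ i, |w i| ≤ 1) (hs : Summable ε) {x : ℝ} (hx : x ∉ uncovered ε w) :
    ∃ I : Set ℝ, IsOpen I ∧ Convex ℝ I ∧ x ∈ I ∧ Disjoint I (uncovered ε w) ∧
      ConvexOn ℝ I fun t => profile ε w t - 17 / 12 * t ^ 2 := by
  simp only [uncovered, mem_sdiff, mem_Icc, not_and_or, not_le, not_not, mem_iUnion] at hx
  rcases hx with (hx | hx) | ⟨i, hx⟩
  · exact ⟨Iio (-1), isOpen_Iio, convex_Iio _, hx,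
      disjoint_left.2 fun t ht ht' => not_le.2 ht ht'.1.1, convexOn_Iio_profile_sub_sq hε hw hs⟩
  · exact ⟨Ioi 1, isOpen_Ioi, convex_Ioi _, hx,
      disjoint_left.2 fun t ht ht' => not_le.2 ht ht'.1.2, convexOn_Ioi_profile_sub_sq hε hw hs⟩
  · exact ⟨_, isOpen_Ioo, convex_Ioo _ _, hx,
      disjoint_left.2 fun t ht ht' => ht'.2 (mem_iUnion.2 ⟨i, ht⟩),
      convexOn_Ioo_profile_sub_sq hε hw hs i⟩

end Profile

theorem neg_mul_add_profile_eq {ε w β : ℕ → ℝ} (hβ : ∑' i, β i = 1 / 4)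
    (hH : ∀ x, Summable fun i => huber (ε i) (x - w i)) (p : ℝ × ℝ) :
    -(p.1 * p.2) + (fOne p + fTwo p + fThree p + fFour p) +
        ∑' i, (gBE (β i) (ε i) (p.1 - w i, p.2) + gBE (β i) (ε i) (p.2 - w i, p.1)) =
      -(p.1 * p.2) + profile ε w p.1 + profile ε w p.2 := by
  have hβs : Summable β := by
    by_contra h
    rw [tsum_eq_zero_of_not_summable h] at hβ
    norm_num at hβ
  have hterm : ∀ i, gBE (β i) (ε i) (p.1 - w i, p.2) + gBE (β i) (ε i) (p.2 - w i, p.1) =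
      β i * (p.1 ^ 2 + p.2 ^ 2) + (huber (ε i) (p.1 - w i) + huber (ε i) (p.2 - w i)) :=
    fun i => by rw [gBE_eq_add_huber, gBE_eq_add_huber]; ring
  rw [tsum_congr hterm, (hβs.mul_right _).tsum_add ((hH _).add (hH _)), tsum_mul_right, hβ,
    (hH _).tsum_add (hH _)]
  simp only [profile, fTwo, fThree, fFour, fOne_eq_add_ramp]
  ring

theorem isLocallyConvexOn_neg_mul_add_profile {ε w : ℕ → ℝ} (hε : ∀ i, 0 ≤ ε i)
    (hw : ∀ i, |w i| ≤ 1) (hs : Summable ε) :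
    IsLocallyConvexOn (uncovered ε w ×ˢ uncovered ε w)ᶜ
      fun q => -(q.1 * q.2) + profile ε w q.1 + profile ε w q.2 := by
  intro p hp
  rw [mem_compl_iff, mem_prod, not_and_or] at hp
  rcases hp with hp | hp
  · obtain ⟨I, hIo, hIc, hpI, hIK, hI⟩ :=
      exists_convexOn_profile_sub_sq_of_notMem_uncovered hε hw hs hp
    exact ⟨I ×ˢ univ, hIo.prod isOpen_univ, hIc.prod convex_univ, ⟨hpI, mem_univ _⟩,
      fun q hq hqK => disjoint_left.1 hIK hq.1 hqK.1,
      convexOn_prod_neg_mul_add (by norm_num) (by norm_num) hI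
        (convexOn_profile_sub_sq hε hw hs)⟩
  · obtain ⟨I, hIo, hIc, hpI, hIK, hI⟩ :=
      exists_convexOn_profile_sub_sq_of_notMem_uncovered hε hw hs hp
    exact ⟨univ ×ˢ I, isOpen_univ.prod hIo, convex_univ.prod hIc, ⟨mem_univ _, hpI⟩,
      fun q hq hqK => disjoint_left.1 hIK hq.2 hqK.2,
      convexOn_prod_neg_mul_add (by norm_num) (by norm_num)
        (convexOn_profile_sub_sq hε hw hs) hI⟩

theorem statement11_general (ε β w : ℕ → ℝ)
    (hε : ∀ i, 0 < ε i)
    (hw : ∀ i, w i ∈ Set.Ioo (-1 : ℝ) 1)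
    (hβsum : ∑' i, β i = 1 / 4)
    (hεsummable : Summable ε) (hεsum : ∑' i, ε i < 1 / 24)
    (g h : ℕ → ℝ × ℝ → ℝ)
    (hg : ∀ i p, g i p = gBE (β i) (ε i) (p.1 - w i, p.2))
    (hh : ∀ i p, h i p = gBE (β i) (ε i) (p.2 - w i, p.1))
    (f : ℝ × ℝ → ℝ)
    (hf : ∀ p : ℝ × ℝ, f p = -(p.1 * p.2) + (fOne p + fTwo p + fThree p + fFour p)
      + ∑' i, (g i p + h i p))
    (K : Set ℝ)
    (hK : K = Set.Icc (-1 : ℝ) 1 \ ⋃ i, Set.Ioo (w i - ε i) (w i + ε i)) :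
    ((f (-1, -1) + f (1, 1)) / 2 < f (0, 0) ∧ ¬ ConvexOn ℝ Set.univ f) ∧
      IsLocallyConvexOn (K ×ˢ K)ᶜ f := by
  have hε' : ∀ i, 0 ≤ ε i := fun i => (hε i).le
  have hw' : ∀ i, |w i| ≤ 1 := fun i => abs_le.2 ⟨(hw i).1.le, (hw i).2.le⟩
  have hf' : f = fun q => -(q.1 * q.2) + profile ε w q.1 + profile ε w q.2 :=
    funext fun p => by
      simp only [hf, hg, hh]
      exact neg_mul_add_profile_eq hβsum (summable_huber hε' hw' hεsummable) p
  have hmid : (f (-1, -1) + f (1, 1)) / 2 < f (0, 0) := by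
    have := profile_one_add_profile_neg_one_lt hε' hw' hεsummable hεsum
    have := profile_nonneg (w := w) hε' 0
    simp only [hf']
    linarith
  refine ⟨⟨hmid, fun hconv => ?_⟩,
    hK ▸ hf' ▸ isLocallyConvexOn_neg_mul_add_profile hε' hw' hεsummable⟩
  have := hconv.2 (mem_univ (-1, -1)) (mem_univ (1, 1)) (by norm_num : (0 : ℝ) ≤ 1 / 2)
    (by norm_num : (0 : ℝ) ≤ 1 / 2) (by norm_num)
  norm_num at this
  linarith

theorem statement11 (ε β w : ℕ → ℝ)
    (hε : ∀ i, 0 < ε i) (hβ : ∀ i, β i ∈ Set.Ioo (0 : ℝ) (1 / 80))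
    (hw : ∀ i, w i ∈ Set.Ioo (-1 : ℝ) 1)
    (hβsum : ∑' i, β i = 1 / 4)
    (hεsummable : Summable ε) (hεsum : ∑' i, ε i < 1 / 24)
    (hdisj : Pairwise (Function.onFun Disjoint
      fun i => Set.Ioo (w i - ε i) (w i + ε i)))
    (hsub : ∀ i, Set.Ioo (w i - ε i) (w i + ε i) ⊆ Set.Icc (-1 : ℝ) 1)
    (g h : ℕ → ℝ × ℝ → ℝ)
    (hg : ∀ i p, g i p = gBE (β i) (ε i) (p.1 - w i, p.2))
    (hh : ∀ i p, h i p = gBE (β i) (ε i) (p.2 - w i, p.1))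
    (f : ℝ × ℝ → ℝ)
    (hf : ∀ p : ℝ × ℝ, f p = -(p.1 * p.2) + (fOne p + fTwo p + fThree p + fFour p)
      + ∑' i, (g i p + h i p))
    (K : Set ℝ)
    (hK : K = Set.Icc (-1 : ℝ) 1 \ ⋃ i, Set.Ioo (w i - ε i) (w i + ε i)) :
    ((f (-1, -1) + f (1, 1)) / 2 < f (0, 0) ∧ ¬ ConvexOn ℝ Set.univ f) ∧
      IsLocallyConvexOn (K ×ˢ K)ᶜ f :=
  statement11_general ε β w hε hw hβsum hεsummable hεsum g h hg hh f hf K hK
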